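/- Let w_1,…,w_n ≥ 0 be nonnegative weights, let K = max_{i≤n}‖x_i‖_∞, let c̄ > 0, and let κ_u > 0 satisfy κ_u·‖δ_T‖ ≤ ‖x_i'δ‖_{2,n} for every δ ∈ Δ_c̄. Then for every ε ∈ (0,1] and every δ ∈ Δ_c̄: ‖√w_i·x_i'δ‖²_{2,n} ≥ ε·‖x_i'δ‖²_{2,n}·(1 − (|{i ≤ n : w_i ≤ ε}|/n)·s·(1+c̄)²·K²/κ_u²). -/

import Mathlib

/-!
On the cone, `‖δ‖₁ ≤ (1 + c̄)‖δ_T‖₁ ≤ (1 + c̄)√s‖δ_T‖ ≤ (1 + c̄)√s‖x_i'δ‖_{2,n}/κ_u`, so every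
single term satisfies `(x_i'δ)² ≤ K²‖δ‖₁² ≤ B := s(1 + c̄)²K²‖x_i'δ‖²_{2,n}/κ_u²`.
Observations with `w_i > ε` contribute at least `ε(x_i'δ)²` to the weighted sum, and each of the
`|{i : w_i ≤ ε}|` others costs at most `εB`.
-/

open Finset

/-- Inner product `x_i'δ` of the `i`-th design vector with `δ`. -/
def xdot {n p : ℕ} (x : Fin n → Fin p → ℝ) (δ : Fin p → ℝ) (i : Fin n) : ℝ :=
  ∑ j, x i j * δ j

lemma sum_abs_le_of_mem_cone {ι : Type*} [Fintype ι] [DecidableEq ι] {T : Finset ι} {c : ℝ}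
    {δ : ι → ℝ} (hδ : ∑ j ∈ Tᶜ, |δ j| ≤ c * ∑ j ∈ T, |δ j|) :
    ∑ j, |δ j| ≤ (1 + c) * ∑ j ∈ T, |δ j| := by
  rw [← sum_add_sum_compl T]
  linarith

lemma abs_xdot_le_mul_sum_abs {n p : ℕ} {x : Fin n → Fin p → ℝ} {K : ℝ} {i : Fin n}
    (hx : ∀ j, |x i j| ≤ K) (δ : Fin p → ℝ) : |xdot x δ i| ≤ K * ∑ j, |δ j| :=
  calc |xdot x δ i| ≤ ∑ j, |x i j| * |δ j| := by
        simpa only [xdot, abs_mul] using abs_sum_le_sum_abs (fun j => x i j * δ j) univ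
    _ ≤ ∑ j, K * |δ j| := by gcongr with j; exact hx j
    _ = K * ∑ j, |δ j| := (mul_sum _ _ _).symm

lemma sq_xdot_le_of_mem_cone {n p : ℕ} {x : Fin n → Fin p → ℝ} {K : ℝ} {i : Fin n}
    (hx : ∀ j, |x i j| ≤ K) (hK : 0 ≤ K) {T : Finset (Fin p)} {c : ℝ} {δ : Fin p → ℝ}
    (hδ : ∑ j ∈ Tᶜ, |δ j| ≤ c * ∑ j ∈ T, |δ j|) :
    xdot x δ i ^ 2 ≤ K ^ 2 * (1 + c) ^ 2 * (T.card * ∑ j ∈ T, δ j ^ 2) := by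
  have hsup : |xdot x δ i| ≤ K * ((1 + c) * ∑ j ∈ T, |δ j|) :=
    (abs_xdot_le_mul_sum_abs hx δ).trans (by gcongr; exact sum_abs_le_of_mem_cone hδ)
  have hCS : (∑ j ∈ T, |δ j|) ^ 2 ≤ T.card * ∑ j ∈ T, δ j ^ 2 := by
    simpa only [sq_abs] using sq_sum_le_card_mul_sum_sq (s := T) (f := fun j => |δ j|)
  calc xdot x δ i ^ 2 = |xdot x δ i| ^ 2 := (sq_abs _).symm
    _ ≤ (K * ((1 + c) * ∑ j ∈ T, |δ j|)) ^ 2 := by gcongr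
    _ = K ^ 2 * (1 + c) ^ 2 * (∑ j ∈ T, |δ j|) ^ 2 := by ring
    _ ≤ K ^ 2 * (1 + c) ^ 2 * (T.card * ∑ j ∈ T, δ j ^ 2) := by gcongr

lemma mul_sub_card_mul_le_sum_mul {ι : Type*} (s : Finset ι) {a w : ι → ℝ} {ε B : ℝ}
    (hε : 0 ≤ ε) (hw : ∀ i ∈ s, 0 ≤ w i) (ha : ∀ i ∈ s, 0 ≤ a i) (haB : ∀ i ∈ s, a i ≤ B) :
    ε * (∑ i ∈ s, a i - #{i ∈ s | w i ≤ ε} * B) ≤ ∑ i ∈ s, w i * a i := by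
  have hpoint : ∀ i ∈ s, ε * a i - ε * B * (if w i ≤ ε then 1 else 0) ≤ w i * a i := by
    intro i hi
    split_ifs with hwi
    · nlinarith [hw i hi, ha i hi, haB i hi]
    · nlinarith [ha i hi]
  calc ε * (∑ i ∈ s, a i - #{i ∈ s | w i ≤ ε} * B)
      = ∑ i ∈ s, (ε * a i - ε * B * (if w i ≤ ε then 1 else 0)) := by
        rw [sum_sub_distrib, ← mul_sum, ← mul_sum, sum_boole]; ring
    _ ≤ ∑ i ∈ s, w i * a i := sum_le_sum hpoint

lemma abs_le_iSup_iSup_abs {ι κ : Type*} [Finite ι] [Finite κ] (x : ι → κ → ℝ) (i : ι) (j : κ) :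
    |x i j| ≤ ⨆ i, ⨆ j, |x i j| :=
  (le_ciSup (Finite.bddAbove_range _) j).trans
    (le_ciSup (Finite.bddAbove_range fun i => ⨆ j, |x i j|) i)

theorem weighted_unweighted_truncation_comparison_general {n p : ℕ}
    (x : Fin n → Fin p → ℝ)
    (w : Fin n → ℝ) (hw : ∀ i, 0 ≤ w i)
    (K : ℝ) (hK : K = ⨆ i : Fin n, ⨆ j : Fin p, |x i j|)
    (T : Finset (Fin p))
    (cbar : ℝ)
    (κu : ℝ) (hκu : 0 < κu)
    (hRE : ∀ δ : Fin p → ℝ, (∑ j ∈ Tᶜ, |δ j|) ≤ cbar * ∑ j ∈ T, |δ j| →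
      κu * Real.sqrt (∑ j ∈ T, δ j ^ 2)
        ≤ Real.sqrt ((1 / (n : ℝ)) * ∑ i, xdot x δ i ^ 2)) :
    ∀ ε : ℝ, ε ∈ Set.Ioc (0 : ℝ) 1 →
      ∀ δ : Fin p → ℝ, (∑ j ∈ Tᶜ, |δ j|) ≤ cbar * ∑ j ∈ T, |δ j| →
        ε * ((1 / (n : ℝ)) * ∑ i, xdot x δ i ^ 2)
            * (1 - (((Finset.univ.filter (fun i : Fin n => w i ≤ ε)).card : ℝ) / (n : ℝ))
                * (T.card : ℝ) * (1 + cbar) ^ 2 * K ^ 2 / κu ^ 2)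
          ≤ (1 / (n : ℝ)) * ∑ i, w i * xdot x δ i ^ 2 := by
  intro ε hε δ hδ
  set Q := (1 / (n : ℝ)) * ∑ i, xdot x δ i ^ 2
  have hK0 : 0 ≤ K := hK ▸ Real.iSup_nonneg fun i => Real.iSup_nonneg fun j => abs_nonneg (x i j)
  have hRE_sq : ∑ j ∈ T, δ j ^ 2 ≤ Q / κu ^ 2 := by
    rw [le_div_iff₀ (by positivity), mul_comm,
      ← Real.sq_sqrt (sum_nonneg fun j _ => sq_nonneg (δ j)), ← mul_pow,
      ← Real.sq_sqrt (by positivity : 0 ≤ Q)]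
    exact pow_le_pow_left₀ (by positivity) (hRE δ hδ) 2
  have hterm : ∀ i, xdot x δ i ^ 2 ≤ K ^ 2 * (1 + cbar) ^ 2 * (T.card * (Q / κu ^ 2)) := fun i =>
    (sq_xdot_le_of_mem_cone (hK ▸ abs_le_iSup_iSup_abs x i) hK0 hδ).trans (by gcongr)
  have htrunc := mul_sub_card_mul_le_sum_mul univ hε.1.le (fun i _ => hw i)
    (fun i _ => sq_nonneg (xdot x δ i)) (fun i _ => hterm i)
  calc _ = 1 / (n : ℝ) * (ε * (∑ i, xdot x δ i ^ 2 - #{i | w i ≤ ε}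
        * (K ^ 2 * (1 + cbar) ^ 2 * (T.card * (Q / κu ^ 2))))) := by ring
    _ ≤ _ := by gcongr

/-- Truncation-based comparison between weighted and unweighted restricted eigenvalue
quantities (Lemma B.4, third pair of relations): for nonnegative weights `w_i`,
`K = max_i ‖x_i‖_∞`, an unweighted restricted eigenvalue `κ_u` over the cone `Δ_c̄`,
every `ε ∈ (0,1]` and every `δ ∈ Δ_c̄`:
`(1/n)∑ᵢ w_i (x_i'δ)² ≥ ε·((1/n)∑ᵢ (x_i'δ)²)·(1 − (#{i : w_i ≤ ε}/n)·s(1+c̄)²K²/κ_u²)`. -/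
theorem weighted_unweighted_truncation_comparison {n p : ℕ} (hn : 0 < n) (hp : 0 < p)
    (x : Fin n → Fin p → ℝ)
    (w : Fin n → ℝ) (hw : ∀ i, 0 ≤ w i)
    (K : ℝ) (hK : K = ⨆ i : Fin n, ⨆ j : Fin p, |x i j|)
    (T : Finset (Fin p)) (hT : 1 ≤ T.card)
    (cbar : ℝ) (hcbar : 0 < cbar)
    (κu : ℝ) (hκu : 0 < κu)
    (hRE : ∀ δ : Fin p → ℝ, (∑ j ∈ Tᶜ, |δ j|) ≤ cbar * ∑ j ∈ T, |δ j| →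
      κu * Real.sqrt (∑ j ∈ T, δ j ^ 2)
        ≤ Real.sqrt ((1 / (n : ℝ)) * ∑ i, xdot x δ i ^ 2)) :
    ∀ ε : ℝ, ε ∈ Set.Ioc (0 : ℝ) 1 →
      ∀ δ : Fin p → ℝ, (∑ j ∈ Tᶜ, |δ j|) ≤ cbar * ∑ j ∈ T, |δ j| →
        ε * ((1 / (n : ℝ)) * ∑ i, xdot x δ i ^ 2)
            * (1 - (((Finset.univ.filter (fun i : Fin n => w i ≤ ε)).card : ℝ) / (n : ℝ))
                * (T.card : ℝ) * (1 + cbar) ^ 2 * K ^ 2 / κu ^ 2)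
          ≤ (1 / (n : ℝ)) * ∑ i, w i * xdot x δ i ^ 2 :=
  weighted_unweighted_truncation_comparison_general x w hw K hK T cbar κu hκu hRE
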